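/- A class of graphs 𝒞 is a first-order transduction of the class ℰ of edgeless graphs if and only if 𝒞 is a perturbation of a class all of whose members have connected components of bounded size. Furthermore, 𝒞 is a non-copying first-order transduction of ℰ if and only if 𝒞 is a perturbation of ℰ. -/

import Mathlib

open SimpleGraph

/-! ### Finite graphs and colored graphs -/

/-- A finite simple graph. -/
structure FGraph : Type 1 where
  V : Type
  [fin : Finite V]
  G : SimpleGraph V

attribute [instance] FGraph.fin

/-- A finite simple graph colored by `c` unary predicates. -/
structure CGraph (c : ℕ) : Type 1 where
  V : Type
  [fin : Finite V]
  G : SimpleGraph V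
  color : Fin c → Set V

attribute [instance] CGraph.fin

/-! ### First-order formulas over `c`-colored graphs -/

/-- First-order formulas in the language of graphs with `c` unary predicates,
with free variables among `Fin m`. -/
inductive Fml (c : ℕ) : ℕ → Type where
  | eq {m} : Fin m → Fin m → Fml c m
  | adj {m} : Fin m → Fin m → Fml c m
  | col {m} : Fin c → Fin m → Fml c m
  | not {m} : Fml c m → Fml c m
  | or {m} : Fml c m → Fml c m → Fml c m
  | ex {m} : Fml c (m + 1) → Fml c m

/-- Satisfaction of a first-order formula in a colored graph. -/
def Fml.Sat {c : ℕ} (A : CGraph c) : {m : ℕ} → Fml c m → (Fin m → A.V) → Prop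
  | _, .eq i j, v => v i = v j
  | _, .adj i j, v => A.G.Adj (v i) (v j)
  | _, .col i x, v => v x ∈ A.color i
  | _, .not φ, v => ¬ Fml.Sat A φ v
  | _, .or φ ψ, v => Fml.Sat A φ v ∨ Fml.Sat A ψ v
  | _, .ex φ, v => ∃ w : A.V, Fml.Sat A φ (Fin.snoc v w)

/-! ### Simple interpretations and transductions -/

/-- A simple interpretation of graphs in `c`-colored graphs: a pair of formulas
`(ν(x), η(x,y))` with `η` symmetric and anti-reflexive. -/
structure Interp (c : ℕ) where
  ν : Fml c 1
  η : Fml c 2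
  symm : ∀ (A : CGraph c) (u v : A.V), Fml.Sat A η ![u, v] → Fml.Sat A η ![v, u]
  irrefl : ∀ (A : CGraph c) (v : A.V), ¬ Fml.Sat A η ![v, v]

/-- The graph interpreted in a colored graph. -/
def Interp.result {c : ℕ} (I : Interp c) (A : CGraph c) :
    SimpleGraph {v : A.V // Fml.Sat A I.ν ![v]} where
  Adj u v := Fml.Sat A I.η ![u.1, v.1]
  symm := ⟨fun u v h => I.symm A u.1 v.1 h⟩
  loopless := ⟨fun v h => I.irrefl A v.1 h⟩

/-- The `k`-copy operation on graphs: the copies of a vertex form a clique, and copies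
with the same index are adjacent iff the original vertices are. -/
def copyGraph {V : Type} (G : SimpleGraph V) (k : ℕ) : SimpleGraph (V × Fin k) where
  Adj a b := (a.1 = b.1 ∧ a.2 ≠ b.2) ∨ (G.Adj a.1 b.1 ∧ a.2 = b.2)
  symm := by
    refine ⟨?_⟩
    rintro a b (⟨h1, h2⟩ | ⟨h1, h2⟩)
    · exact Or.inl ⟨h1.symm, h2.symm⟩
    · exact Or.inr ⟨h1.symm, h2.symm⟩
  loopless := by
    refine ⟨?_⟩
    rintro a (⟨_, h⟩ | ⟨h, _⟩)
    · exact h rfl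
    · exact G.loopless.irrefl _ h

/-- The `k`-copy operation on finite graphs. -/
def FGraph.copy (G : FGraph) (k : ℕ) : FGraph where
  V := G.V × Fin k
  G := copyGraph G.G k

/-- A transduction: a composition `I ∘ Γ_𝒰 ∘ C_k` of a copy operation, a coloring
operation and a simple interpretation. -/
structure Transduction where
  k : ℕ
  kpos : 0 < k
  c : ℕ
  I : Interp c

/-- The colored graph obtained from `C_k(G)` by a choice of coloring. -/
def Transduction.copyCGraph (T : Transduction) (G : FGraph)
    (color : Fin T.c → Set (G.V × Fin T.k)) : CGraph T.c where
  V := G.V × Fin T.k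
  G := copyGraph G.G T.k
  color := color

/-- `H ∈ T(G)` (up to isomorphism). -/
def Transduction.mem (T : Transduction) (G H : FGraph) : Prop :=
  ∃ color : Fin T.c → Set (G.V × Fin T.k),
    Nonempty (H.G ≃g T.I.result (T.copyCGraph G color))

/-- The image `T(𝒟)` of a class of graphs under a transduction. -/
def TImage (T : Transduction) (D : Set FGraph) : Set FGraph :=
  {H | ∃ G ∈ D, T.mem G H}

/-- `𝒞 ⊑_FO 𝒟` : `𝒞` is a first-order transduction of `𝒟`. -/
def SqFO (C D : Set FGraph) : Prop := ∃ T : Transduction, C ⊆ TImage T D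

/-- `𝒞 ⊑°_FO 𝒟` : `𝒞` is a non-copying first-order transduction of `𝒟`. -/
def SqFOnc (C D : Set FGraph) : Prop := ∃ T : Transduction, T.k = 1 ∧ C ⊆ TImage T D

/-- `𝒞 ≡_FO 𝒟`. -/
def EquivFO (C D : Set FGraph) : Prop := SqFO C D ∧ SqFO D C

/-- `T'` subsumes `T` : `T'(G) ⊇ T(G)` for every graph `G`. -/
def Subsumes (T' T : Transduction) : Prop := ∀ G H : FGraph, T.mem G H → T'.mem G H

/-! ### Perturbations -/

/-- The subset complementation `⊕M`: complement the adjacency between distinct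
vertices that both belong to `M`. -/
def scompGraph {V : Type} (G : SimpleGraph V) (M : Set V) : SimpleGraph V where
  Adj u v := u ≠ v ∧ (G.Adj u v ↔ ¬(u ∈ M ∧ v ∈ M))
  symm := by
    refine ⟨?_⟩
    rintro u v ⟨h1, h2⟩
    refine ⟨h1.symm, ?_, ?_⟩
    · intro h hm
      exact (h2.mp (G.adj_symm h)) ⟨hm.2, hm.1⟩
    · intro h
      exact G.adj_symm (h2.mpr fun hm => h ⟨hm.2, hm.1⟩)
  loopless := ⟨fun v h => h.1 rfl⟩

/-- Applying a finite sequence of subset complementations. -/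
def perturbGraph {V : Type} : List (Set V) → SimpleGraph V → SimpleGraph V
  | [], G => G
  | M :: Ms, G => perturbGraph Ms (scompGraph G M)

/-- `H ∈ P(G)` for a perturbation `P` that is the composition of `p` subset
complementations (up to isomorphism). -/
def PerturbMem (p : ℕ) (G H : FGraph) : Prop :=
  ∃ Z : Fin p → Set G.V, Nonempty (H.G ≃g perturbGraph (List.ofFn Z) G.G)

/-- The image `P(𝒟)` of a class under a perturbation with `p` marks. -/
def PerturbImage (p : ℕ) (D : Set FGraph) : Set FGraph :=
  {H | ∃ G ∈ D, PerturbMem p G H}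

/-- `𝒞` is a perturbation of `𝒟`. -/
def IsPerturbationOfClass (C D : Set FGraph) : Prop := ∃ p, C ⊆ PerturbImage p D

/-! ### Locality -/

/-- The ball of radius `r` around a set `S` of vertices. -/
def ballSet {V : Type} (G : SimpleGraph V) (r : ℕ) (S : Set V) : Set V :=
  {v | ∃ u ∈ S, G.Reachable u v ∧ G.dist u v ≤ r}

lemma mem_ballSet_self {V : Type} (G : SimpleGraph V) (r : ℕ) {S : Set V} {v : V}
    (hv : v ∈ S) : v ∈ ballSet G r S :=
  ⟨v, hv, Reachable.refl v, by rw [SimpleGraph.dist_self]; exact Nat.zero_le r⟩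

/-- The colored subgraph induced on a set of vertices. -/
def CGraph.induce {c : ℕ} (A : CGraph c) (S : Set A.V) : CGraph c where
  V := ↥S
  G := A.G.induce S
  color := fun i => {v | (v : A.V) ∈ A.color i}

/-- A formula is `r`-local if its truth only depends on the subgraph induced by the
ball of radius `r` around its free variables. -/
def IsLocalFml {c m : ℕ} (r : ℕ) (φ : Fml c m) : Prop :=
  ∀ (A : CGraph c) (v : Fin m → A.V),
    Fml.Sat A φ v ↔
      Fml.Sat (A.induce (ballSet A.G r (Set.range v))) φ
        (fun i => ⟨v i, mem_ballSet_self A.G r (Set.mem_range_self i)⟩)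

/-- A formula is strongly `r`-local if it is `r`-local and, whenever it holds of a
tuple, the entries of the tuple are pairwise at distance at most `r`. -/
def IsStronglyLocalFml {c m : ℕ} (r : ℕ) (φ : Fml c m) : Prop :=
  IsLocalFml r φ ∧
    ∀ (A : CGraph c) (v : Fin m → A.V), Fml.Sat A φ v →
      ∀ i j : Fin m, A.G.Reachable (v i) (v j) ∧ A.G.dist (v i) (v j) ≤ r

/-- An immersive transduction: non-copying, with strongly local formulas. -/
def Transduction.Immersive (T : Transduction) : Prop :=
  T.k = 1 ∧ ∃ r : ℕ, IsStronglyLocalFml r T.I.ν ∧ IsStronglyLocalFml r T.I.η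

/-! ### Graph classes -/

/-- A set of graphs closed under isomorphism. -/
def IsoClosed (C : Set FGraph) : Prop :=
  ∀ G H : FGraph, Nonempty (G.G ≃g H.G) → G ∈ C → H ∈ C

/-- `H` is (isomorphic to) an induced subgraph of `G`. -/
def IsInducedSubgraphOf (H G : FGraph) : Prop :=
  ∃ f : H.V → G.V, Function.Injective f ∧ ∀ u v, H.G.Adj u v ↔ G.G.Adj (f u) (f v)

/-- A hereditary class: closed under induced subgraphs. -/
def HereditaryClass (C : Set FGraph) : Prop :=
  ∀ G ∈ C, ∀ H : FGraph, IsInducedSubgraphOf H G → H ∈ C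

/-- `H` is (isomorphic to) a subgraph of `G`. -/
def IsSubgraphOf (H G : FGraph) : Prop :=
  ∃ f : H.V → G.V, Function.Injective f ∧ ∀ u v, H.G.Adj u v → G.G.Adj (f u) (f v)

/-- The monotone closure of a class: all subgraphs of its members. -/
def monotoneClosure (C : Set FGraph) : Set FGraph :=
  {H | ∃ G ∈ C, IsSubgraphOf H G}

/-- `G` contains `K_{t,t}` as a subgraph. -/
def HasKtt {V : Type} (G : SimpleGraph V) (t : ℕ) : Prop :=
  ∃ a b : Fin t → V, Function.Injective a ∧ Function.Injective b ∧
    (∀ i j, a i ≠ b j) ∧ ∀ i j, G.Adj (a i) (b j)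

/-- A weakly sparse class: some `K_{t,t}` is a subgraph of no member. -/
def WeaklySparse (C : Set FGraph) : Prop := ∃ t : ℕ, ∀ G ∈ C, ¬ HasKtt G.G t

/-- Disjoint union of two graphs. -/
def sumGraph {V W : Type} (G : SimpleGraph V) (H : SimpleGraph W) : SimpleGraph (V ⊕ W) where
  Adj a b := match a, b with
    | .inl u, .inl v => G.Adj u v
    | .inr u, .inr v => H.Adj u v
    | _, _ => False
  symm := by
    refine ⟨?_⟩
    rintro (u | u) (v | v) h
    · exact G.adj_symm h
    · exact h.elim
    · exact h.elim
    · exact H.adj_symm h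
  loopless := by
    refine ⟨?_⟩
    rintro (v | v) h
    · exact G.loopless.irrefl _ h
    · exact H.loopless.irrefl _ h

/-- Disjoint union of finite graphs. -/
def FGraph.disjUnion (G H : FGraph) : FGraph where
  V := G.V ⊕ H.V
  G := sumGraph G.G H.G

/-- An addable class: closed under disjoint unions. -/
def Addable (C : Set FGraph) : Prop :=
  ∀ G ∈ C, ∀ H ∈ C, FGraph.disjUnion G H ∈ C

/-- The degree of a vertex. -/
noncomputable def degCard (G : FGraph) (v : G.V) : ℕ := Nat.card {u : G.V // G.G.Adj v u}

/-- A class with bounded maximum degree. -/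
def BddDegree (C : Set FGraph) : Prop := ∃ D : ℕ, ∀ G ∈ C, ∀ v : G.V, degCard G v ≤ D
/-! ### Further graph constructions and parameters -/

/-- Auxiliary instance. -/
instance {α : Type} [Finite α] : Finite (Option α) :=
  Finite.of_equiv _ (Equiv.optionEquivSumPUnit.{0,0} α).symm

/-- Adding an apex vertex adjacent to all vertices. -/
def apexGraph {V : Type} (G : SimpleGraph V) : SimpleGraph (Option V) where
  Adj a b := match a, b with
    | none, none => False
    | none, some _ => True
    | some _, none => True
    | some u, some v => G.Adj u v
  symm := by
    refine ⟨?_⟩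
    rintro (_ | u) (_ | v) h
    · exact h.elim
    · trivial
    · trivial
    · exact G.adj_symm h
  loopless := by
    refine ⟨?_⟩
    rintro (_ | v) h
    · exact h.elim
    · exact G.loopless.irrefl _ h

/-- The class `𝒞 ∨ K₁` of graphs of `𝒞` with an added apex. -/
def JoinK1 (C : Set FGraph) : Set FGraph :=
  {H | ∃ G ∈ C, Nonempty (H.G ≃g apexGraph G.G)}

/-- The ball of radius `r` around a vertex, as a finite graph. -/
def ballFGraph (G : FGraph) (r : ℕ) (v : G.V) : FGraph where
  V := ↥(ballSet G.G r {v})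
  G := G.G.induce (ballSet G.G r {v})

/-- The class `𝓛_r(ℱ)` of all balls of radius `r` of graphs of `ℱ`. -/
def LocClass (r : ℕ) (F : Set FGraph) : Set FGraph :=
  {H | ∃ G ∈ F, ∃ v : G.V, Nonempty (H.G ≃g (ballFGraph G r v).G)}

/-- Adding a pendant vertex adjacent only to `v`. -/
def pendantGraph {V : Type} (G : SimpleGraph V) (v : V) : SimpleGraph (Option V) where
  Adj a b := match a, b with
    | none, none => False
    | none, some w => w = v
    | some u, none => u = v
    | some u, some w => G.Adj u w
  symm := by
    refine ⟨?_⟩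
    rintro (_ | u) (_ | w) h
    · exact h.elim
    · exact h
    · exact h
    · exact G.adj_symm h
  loopless := by
    refine ⟨?_⟩
    rintro (_ | w) h
    · exact h.elim
    · exact G.loopless.irrefl _ h

/-- The finite graph obtained by adding a pendant vertex at `v`. -/
def FGraph.addPendant (G : FGraph) (v : G.V) : FGraph where
  V := Option G.V
  G := pendantGraph G.G v

/-- `G` is obtained from `H` by adding at most `h` vertices, joined arbitrarily. -/
def NearlyOf (h : ℕ) (G H : FGraph) : Prop :=
  ∃ f : H.V → G.V, Function.Injective f ∧
    (∀ u v, H.G.Adj u v ↔ G.G.Adj (f u) (f v)) ∧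
    Nat.card {v : G.V // v ∉ Set.range f} ≤ h

/-- The class `𝒞` is nearly `𝒟`. -/
def Nearly (C D : Set FGraph) : Prop :=
  ∃ h : ℕ, ∀ G ∈ C, ∃ H ∈ D, NearlyOf h G H

/-- The class `ℰ` of all edgeless graphs. -/
def EdgelessClass : Set FGraph := {G | ∀ u v : G.V, ¬ G.G.Adj u v}

/-- All members of the class have connected components of bounded size. -/
def BddComponents (D : Set FGraph) : Prop :=
  ∃ n : ℕ, ∀ G ∈ D, ∀ v : G.V, Nat.card {u : G.V // G.G.Reachable v u} ≤ n

/-- The class of all cubic (3-regular) graphs. -/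
def CubicClass : Set FGraph := {G | ∀ v : G.V, degCard G v = 3}

/-- The class `𝒫` of all paths. -/
def PathClass : Set FGraph :=
  {G | ∃ n : ℕ, Nonempty (G.G ≃g SimpleGraph.pathGraph n)}

/-- The `ℓ`-th power of a graph: two vertices are adjacent iff their distance
is between `1` and `ℓ`. -/
def powGraph {V : Type} (G : SimpleGraph V) (ℓ : ℕ) : SimpleGraph V where
  Adj u v := u ≠ v ∧ G.Reachable u v ∧ G.dist u v ≤ ℓ
  symm := by
    refine ⟨?_⟩
    rintro u v ⟨h1, h2, h3⟩
    exact ⟨h1.symm, h2.symm, by rwa [SimpleGraph.dist_comm]⟩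
  loopless := ⟨fun v h => h.1 rfl⟩

/-- The bandwidth of `G` is at most `ℓ` : `G` is a subgraph of the `ℓ`-th power
of a path. -/
def BandwidthLE (G : FGraph) (ℓ : ℕ) : Prop :=
  ∃ n : ℕ, ∃ f : G.V → Fin n, Function.Injective f ∧
    ∀ u v, G.G.Adj u v → (powGraph (SimpleGraph.pathGraph n) ℓ).Adj (f u) (f v)

/-- A class with bounded bandwidth. -/
def BddBandwidth (D : Set FGraph) : Prop := ∃ ℓ : ℕ, ∀ G ∈ D, BandwidthLE G ℓ

/-- The class of all cubic trees: trees all of whose vertices have degree 3 or 1. -/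
def CubicTreeClass : Set FGraph :=
  {G | G.G.IsTree ∧ ∀ v : G.V, degCard G v = 3 ∨ degCard G v = 1}

/-- `H` contains a clique on `s` vertices. -/
def HasCliqueN {V : Type} (H : SimpleGraph V) (s : ℕ) : Prop :=
  ∃ f : Fin s → V, Function.Injective f ∧ ∀ i j, i ≠ j → H.Adj (f i) (f j)

/-- A chordal graph: no induced cycle of length at least 4. -/
def IsChordal {V : Type} (H : SimpleGraph V) : Prop :=
  ∀ n : ℕ, 4 ≤ n → ¬ ∃ f : Fin n → V, Function.Injective f ∧
    ∀ i j, (SimpleGraph.cycleGraph n).Adj i j ↔ H.Adj (f i) (f j)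

/-- `tw(G) ≤ n` : `G` is a subgraph of a chordal graph with clique number at most `n+1`. -/
def TreewidthLE (G : FGraph) (n : ℕ) : Prop :=
  ∃ H : SimpleGraph G.V, IsChordal H ∧ G.G ≤ H ∧ ¬ HasCliqueN H (n + 2)

/-- A class with bounded treewidth. -/
def BddTreewidth (D : Set FGraph) : Prop := ∃ n : ℕ, ∀ G ∈ D, TreewidthLE G n

/-- An interval graph: the intersection graph of a family of real intervals. -/
def IsIntervalGraph {V : Type} (H : SimpleGraph V) : Prop :=
  ∃ l r : V → ℝ, (∀ v, l v ≤ r v) ∧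
    ∀ u v, u ≠ v → (H.Adj u v ↔ (l u ≤ r v ∧ l v ≤ r u))

/-- `pw(G) ≤ n` : `G` is a subgraph of an interval graph with clique number at
most `n+1`. -/
def PathwidthLE (G : FGraph) (n : ℕ) : Prop :=
  ∃ H : SimpleGraph G.V, IsIntervalGraph H ∧ G.G ≤ H ∧ ¬ HasCliqueN H (n + 2)

/-- The class `𝒫𝒲_n` of all graphs of pathwidth at most `n`. -/
def PWClass (n : ℕ) : Set FGraph := {G | PathwidthLE G n}

/-- `G` is a forest of depth at most `n` : it is acyclic and roots may be chosen,
one in each connected component, such that every vertex is at distance at most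
`n - 1` from the root of its component. -/
def ForestDepthLE (n : ℕ) (G : FGraph) : Prop :=
  G.G.IsAcyclic ∧ ∃ ρ : G.V → G.V,
    (∀ v, G.G.Reachable (ρ v) v ∧ G.G.dist (ρ v) v ≤ n - 1) ∧
    ∀ u v, G.G.Reachable u v → ρ u = ρ v

/-- The class `𝒯_n` of forests of depth at most `n`. -/
def TreeDepthClass (n : ℕ) : Set FGraph := {G | ForestDepthLE n G}

/-- A star forest: an acyclic graph with no path on four distinct vertices. -/
def IsStarForest (G : FGraph) : Prop :=
  G.G.IsAcyclic ∧ ∀ a b c d : G.V, G.G.Adj a b → G.G.Adj b c → G.G.Adj c d →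
    a = c ∨ b = d ∨ a = d

/-- The class `𝒯₂` of all star forests. -/
def StarForestClass : Set FGraph := {G | IsStarForest G}

/-- `H` is a depth-`r` shallow minor of `G` : it is obtained by contracting
pairwise disjoint connected subgraphs of radius at most `r` and deleting
vertices and edges. -/
def IsShallowMinor (r : ℕ) (H G : FGraph) : Prop :=
  ∃ φ : H.V → Set G.V,
    (∀ v, (φ v).Nonempty) ∧
    (∀ u v, u ≠ v → Disjoint (φ u) (φ v)) ∧
    (∀ v : H.V, ∃ c : ↥(φ v), ∀ u : ↥(φ v),
      (G.G.induce (φ v)).Reachable c u ∧ (G.G.induce (φ v)).dist c u ≤ r) ∧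
    (∀ u v : H.V, H.G.Adj u v → ∃ a ∈ φ u, ∃ b ∈ φ v, G.G.Adj a b)

/-- The average degree of `H` is at most `d`. -/
def AvgDegLE (H : FGraph) (d : ℕ) : Prop :=
  2 * Nat.card H.G.edgeSet ≤ d * Nat.card H.V

/-- A class of bounded expansion: for some `f : ℕ → ℕ`, every depth-`r` shallow
minor of a member has average degree at most `f r`. -/
def BoundedExpansion (C : Set FGraph) : Prop :=
  ∃ f : ℕ → ℕ, ∀ r : ℕ, ∀ G ∈ C, ∀ H : FGraph, IsShallowMinor r H G → AvgDegLE H (f r)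

/-- A proper coloring `f` of `G` with `n` colors is a star coloring if no path on
four vertices receives only two colors. -/
def IsStarColoring {V : Type} (G : SimpleGraph V) (n : ℕ) (f : V → Fin n) : Prop :=
  (∀ u v, G.Adj u v → f u ≠ f v) ∧
  ∀ a b c d, G.Adj a b → G.Adj b c → G.Adj c d → a ≠ c → b ≠ d → a ≠ d →
    ¬ (f a = f c ∧ f b = f d)

/-- A class with bounded star chromatic number. -/
def BddStarChrom (C : Set FGraph) : Prop :=
  ∃ n : ℕ, ∀ G ∈ C, ∃ f : G.V → Fin n, IsStarColoring G.G n f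

/-!
In a colored `k`-copy of an edgeless graph, every permutation of the original vertices that
preserves the colors of their copies is an automorphism. Hence the interpreted adjacency between
copies of two distinct original vertices depends only on the (finitely many) types of the two
endpoints, and any symmetric relation on a finite set of types is the parity of a bounded number
of marks. Complementing along these marks leaves only edges inside the cliques of copies, so the
transduced graph is a perturbation of a graph with components of at most `k` vertices.

Conversely, a graph with components of at most `n` vertices embeds into `n` copies of the
edgeless graph on its components; colors record the position of each vertex in its clique and
its neighbours there, and further colors carry the marks of the perturbation.
For `k = n = 1` the components are single vertices, i.e. the graph is edgeless.
-/

section MarkParity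

variable {α : Type}

def MarkParity : List (Set α) → α → α → Prop
  | [], _, _ => False
  | M :: L, u, v => Xor (u ∈ M ∧ v ∈ M) (MarkParity L u v)

lemma markParity_comm (L : List (Set α)) (u v : α) : MarkParity L u v ↔ MarkParity L v u := by
  induction L with
  | nil => rfl
  | cons M L ih => simp only [MarkParity, ih, and_comm]

lemma markParity_append (L₁ L₂ : List (Set α)) (u v : α) :
    MarkParity (L₁ ++ L₂) u v ↔ Xor (MarkParity L₁ u v) (MarkParity L₂ u v) := by
  induction L₁ with
  | nil => simp [MarkParity]
  | cons M L ih => simp only [List.cons_append, MarkParity, ih]; grind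

lemma markParity_map {β : Type} (L : List (Set α)) (g : Set α → Set β) {u v : α} {x y : β}
    (h : ∀ M, (x ∈ g M ∧ y ∈ g M) ↔ (u ∈ M ∧ v ∈ M)) :
    MarkParity (L.map g) x y ↔ MarkParity L u v := by
  induction L with
  | nil => rfl
  | cons M L ih => simp only [List.map_cons, MarkParity, h, ih]

lemma perturbGraph_adj {V : Type} (L : List (Set V)) (G : SimpleGraph V) (u v : V) :
    (perturbGraph L G).Adj u v ↔ u ≠ v ∧ Xor (G.Adj u v) (MarkParity L u v) := by
  induction L generalizing G with
  | nil =>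
    have := G.ne_of_adj (a := u) (b := v)
    simp only [perturbGraph, MarkParity]
    grind
  | cons M L ih =>
    simp only [perturbGraph, ih, scompGraph, MarkParity]
    grind

lemma perturbGraph_perturbGraph {V : Type} (L : List (Set V)) (G : SimpleGraph V) :
    perturbGraph L (perturbGraph L G) = G := by
  ext u v
  simp only [perturbGraph_adj]
  have := G.ne_of_adj (a := u) (b := v)
  grind

/-- When `a = b` the three marks coincide, so `s(a, a)` is still toggled an odd number of times. -/
def pairMarks (P : Prop) (a b : α) : List (Set α) :=
  [{x | P ∧ (x = a ∨ x = b)}, {x | P ∧ x = a}, {x | P ∧ x = b}]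

lemma markParity_pairMarks (P : Prop) (a b s t : α) :
    MarkParity (pairMarks P a b) s t ↔ P ∧ s(s, t) = s(a, b) := by
  by_cases hP : P <;> simp only [pairMarks, MarkParity, Sym2.eq_iff, hP] <;> grind

lemma exists_ofFn_eq {β : Type} (L : List β) {p : ℕ} (h : L.length = p) :
    ∃ Z : Fin p → β, List.ofFn Z = L := by
  subst h
  exact ⟨L.get, List.ofFn_get L⟩

theorem exists_markParity_iff [Finite α] (R : α → α → Prop) (hR : ∀ a b, R a b → R b a) :
    ∃ Z : Fin (3 * Nat.card (Sym2 α)) → Set α,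
      ∀ s t, MarkParity (List.ofFn Z) s t ↔ R s t := by
  classical
  cases nonempty_fintype α
  have hR_sym2 {a b c d : α} (h : s(a, b) = s(c, d)) : R a b → R c d := by
    rcases Sym2.eq_iff.mp h with ⟨rfl, rfl⟩ | ⟨rfl, rfl⟩
    exacts [id, hR _ _]
  let marks (z : Sym2 α) := pairMarks (R z.out.1 z.out.2) z.out.1 z.out.2
  have hmarks (z : Sym2 α) (s t : α) : MarkParity (marks z) s t ↔ s(s, t) = z ∧ R s t := by
    have hz : s(z.out.1, z.out.2) = z := Quot.out_eq z
    rw [markParity_pairMarks]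
    constructor
    · rintro ⟨h, he⟩
      exact ⟨he.trans hz, hR_sym2 he.symm h⟩
    · rintro ⟨he, h⟩
      exact ⟨hR_sym2 (he.trans hz.symm) h, he.trans hz.symm⟩
  have hflat (l : List (Sym2 α)) (hl : l.Nodup) (s t : α) :
      MarkParity (l.flatMap marks) s t ↔ s(s, t) ∈ l ∧ R s t := by
    induction l with
    | nil => simp [MarkParity]
    | cons z l ih =>
      obtain ⟨hz, hl⟩ := List.nodup_cons.mp hl
      rw [List.flatMap_cons, markParity_append, hmarks, ih hl, List.mem_cons]
      grind
  obtain ⟨Z, hZ⟩ := exists_ofFn_eq (p := 3 * Nat.card (Sym2 α))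
    ((Finset.univ : Finset (Sym2 α)).toList.flatMap marks)
    (by simp [List.length_flatMap, marks, pairMarks, Nat.card_eq_fintype_card, mul_comm])
  exact ⟨Z, fun s t => by rw [hZ, hflat _ (Finset.nodup_toList _)]; simp⟩

end MarkParity

namespace Fml

variable {c m : ℕ}

def falsum : Fml c m := .ex (.not (.eq (Fin.last m) (Fin.last m)))

def and (φ ψ : Fml c m) : Fml c m := .not (.or (.not φ) (.not ψ))

def xor (φ ψ : Fml c m) : Fml c m := (φ.or ψ).and (φ.and ψ).not

def iOr : List (Fml c m) → Fml c m
  | [] => falsum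
  | φ :: L => φ.or (iOr L)

def oddCommonColors (L : List (Fin c)) (x y : Fin m) : Fml c m :=
  L.foldr (fun t φ => ((col t x).and (col t y)).xor φ) falsum

variable (A : CGraph c) (v : Fin m → A.V)

@[simp] lemma sat_falsum : ¬ Sat A (falsum : Fml c m) v := by
  simp [falsum, Sat]

@[simp] lemma sat_and (φ ψ : Fml c m) : Sat A (φ.and ψ) v ↔ Sat A φ v ∧ Sat A ψ v := by
  simp [Fml.and, Sat]

@[simp] lemma sat_xor (φ ψ : Fml c m) :
    Sat A (φ.xor ψ) v ↔ Xor (Sat A φ v) (Sat A ψ v) := by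
  simp only [Fml.xor, sat_and, Sat]
  grind

@[simp] lemma sat_iOr (L : List (Fml c m)) : Sat A (iOr L) v ↔ ∃ φ ∈ L, Sat A φ v := by
  induction L with
  | nil => simp [iOr]
  | cons φ L ih => simp [iOr, Sat, ih]

lemma sat_oddCommonColors (L : List (Fin c)) (x y : Fin m) :
    Sat A (oddCommonColors L x y) v ↔ MarkParity (L.map A.color) (v x) (v y) := by
  induction L with
  | nil => simp [oddCommonColors, MarkParity]
  | cons t L ih => simp [oddCommonColors, MarkParity, Sat, ← ih]

theorem sat_comp_equiv {B : CGraph c} (e : A.V ≃ B.V)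
    (hadj : ∀ z w, B.G.Adj (e z) (e w) ↔ A.G.Adj z w)
    (hcol : ∀ i z, e z ∈ B.color i ↔ z ∈ A.color i) (φ : Fml c m) :
    Sat B φ (e ∘ v) ↔ Sat A φ v := by
  induction φ with
  | eq i j => simp [Sat]
  | adj i j => exact hadj _ _
  | col i x => exact hcol _ _
  | not φ ih => exact (ih v).not
  | or φ ψ ih₁ ih₂ => exact or_congr (ih₁ v) (ih₂ v)
  | ex φ ih =>
    refine (e.exists_congr fun w => ?_).symm
    rw [← ih, Fin.comp_snoc]

end Fml

def ComponentsLE (n : ℕ) (G : FGraph) : Prop :=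
  ∀ v : G.V, Nat.card {u : G.V // G.G.Reachable v u} ≤ n

lemma ComponentsLE.mono {m n : ℕ} {G : FGraph} (hmn : m ≤ n) (hG : ComponentsLE m G) :
    ComponentsLE n G :=
  fun v => (hG v).trans hmn

lemma ComponentsLE.of_iso {n : ℕ} {G H : FGraph} (e : G.G ≃g H.G) (hG : ComponentsLE n G) :
    ComponentsLE n H := by
  intro v
  calc Nat.card {u // H.G.Reachable v u} = Nat.card {u // G.G.Reachable (e.symm v) u} :=
        Nat.card_congr (Equiv.subtypeEquiv e.symm.toEquiv fun _ => e.symm.reachable_iff.symm)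
    _ ≤ n := hG _

lemma isoClosed_componentsLE (n : ℕ) : IsoClosed {G | ComponentsLE n G} :=
  fun _ _ ⟨e⟩ => ComponentsLE.of_iso e

lemma componentsLE_of_injective {n : ℕ} {G : FGraph} {β : Type} (ι : G.V → β × Fin n)
    (hι : Function.Injective ι) (hadj : ∀ u v, G.G.Adj u v → (ι u).1 = (ι v).1) :
    ComponentsLE n G := by
  intro v
  have hfst {u : G.V} (h : G.G.Reachable v u) : (ι v).1 = (ι u).1 := by
    rw [reachable_iff_reflTransGen] at h
    induction h with
    | refl => rfl
    | tail _ huw ih => exact ih.trans (hadj _ _ huw)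
  have hinj : Function.Injective fun u : {u // G.G.Reachable v u} => (ι u).2 :=
    fun u w h => Subtype.ext (hι (Prod.ext ((hfst u.2).symm.trans (hfst w.2)) h))
  simpa using Nat.card_le_card_of_injective _ hinj

lemma componentsLE_one_iff {G : FGraph} : ComponentsLE 1 G ↔ G ∈ EdgelessClass := by
  constructor
  · intro hG u v huv
    have : Subsingleton {w : G.V // G.G.Reachable u w} :=
      (Finite.card_le_one_iff_subsingleton).mp (hG u)
    exact huv.ne (congrArg Subtype.val (Subsingleton.elim ⟨u, .refl u⟩ ⟨v, huv.reachable⟩))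
  · intro hG
    exact componentsLE_of_injective (fun u => (u, 0)) (fun _ _ h => congrArg Prod.fst h)
      fun u v huv => (hG u v huv).elim

lemma exists_injective_prod_fin {α β : Type} [Finite α] {n : ℕ} (f : α → β)
    (hf : ∀ b, Nat.card {a // f a = b} ≤ n) :
    ∃ g : α → Fin n, Function.Injective fun a => (f a, g a) := by
  choose g hg using fun b => (⟨_, (Fin.castLE_injective (hf b)).comp
    (Finite.equivFin _).injective⟩ : ∃ g : {a // f a = b} → Fin n, Function.Injective g)
  exact ⟨fun a => g (f a) ⟨a, rfl⟩, (Equiv.sigmaEquivProd _ _).injective.comp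
    ((Function.injective_id.sigma_map hg).comp (Equiv.sigmaFiberEquiv f).symm.injective)⟩

lemma ComponentsLE.exists_injective {n : ℕ} {G : FGraph} (hG : ComponentsLE n G) :
    ∃ ι : G.V → G.G.ConnectedComponent × Fin n,
      Function.Injective ι ∧ ∀ u v, G.G.Adj u v → (ι u).1 = (ι v).1 := by
  obtain ⟨g, hg⟩ := exists_injective_prod_fin G.G.connectedComponentMk fun C => C.ind fun v =>
    (Nat.card_congr (Equiv.subtypeEquivRight fun u => ConnectedComponent.eq.trans
      reachable_comm)).trans_le (hG v)
  exact ⟨_, hg, fun u v huv => ConnectedComponent.eq.mpr huv.reachable⟩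

lemma copyGraph_adj_of_forall_not_adj {V : Type} {G : SimpleGraph V} (hG : ∀ u v, ¬ G.Adj u v)
    {k : ℕ} (a b : V × Fin k) : (copyGraph G k).Adj a b ↔ a.1 = b.1 ∧ a.2 ≠ b.2 := by
  simp [copyGraph, hG]

lemma exists_perm_apply_pair {α β : Type} (f : α → β) {a b a' b' : α} (hab : a ≠ b)
    (hab' : a' ≠ b') (ha : f a = f a') (hb : f b = f b') :
    ∃ σ : Equiv.Perm α, σ a = a' ∧ σ b = b' ∧ ∀ x, f (σ x) = f x := by
  classical
  have swap_pres {x y : α} (h : f x = f y) (z : α) : f (Equiv.swap x y z) = f z := by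
    rcases eq_or_ne z x with rfl | hzx
    · simp [h]
    rcases eq_or_ne z y with rfl | hzy
    · simp [h]
    · rw [Equiv.swap_apply_of_ne_of_ne hzx hzy]
  set w := Equiv.swap a a' b
  have hw : f w = f b' := (swap_pres ha b).trans hb
  refine ⟨(Equiv.swap a a').trans (Equiv.swap w b'), ?_, ?_, fun x => ?_⟩
  · have hw' : a' ≠ w := fun h => hab (by simpa [w] using congrArg (Equiv.swap a a') h)
    simp [Equiv.swap_apply_of_ne_of_ne hw' hab']
  · simp [w]
  · simp only [Equiv.trans_apply, swap_pres hw, swap_pres ha]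

section CopyTypes

variable {V : Type} {k c : ℕ}

abbrev CopyType (k c : ℕ) : Type := (Fin k → Fin c → Prop) × Fin k

def copyType (color : Fin c → Set (V × Fin k)) (z : V × Fin k) : CopyType k c :=
  (fun j i => (z.1, j) ∈ color i, z.2)

lemma Transduction.sat_iff_of_copyType_eq (T : Transduction) {G : FGraph}
    (hG : G ∈ EdgelessClass) (color : Fin T.c → Set (G.V × Fin T.k)) (φ : Fml T.c 2)
    {x y x' y' : G.V × Fin T.k} (hxy : x.1 ≠ y.1) (hxy' : x'.1 ≠ y'.1)
    (hx : copyType color x = copyType color x') (hy : copyType color y = copyType color y') :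
    Fml.Sat (T.copyCGraph G color) φ ![x, y] ↔ Fml.Sat (T.copyCGraph G color) φ ![x', y'] := by
  simp only [copyType, Prod.mk.injEq] at hx hy
  obtain ⟨σ, hσx, hσy, hσ⟩ := exists_perm_apply_pair (fun g j i => (g, j) ∈ color i)
    hxy hxy' hx.1 hy.1
  set A := T.copyCGraph G color
  let e : A.V ≃ A.V := σ.prodCongr (Equiv.refl (Fin T.k))
  have hadj (z w : A.V) : A.G.Adj (e z) (e w) ↔ A.G.Adj z w :=
    (copyGraph_adj_of_forall_not_adj hG (e z) (e w)).trans (Iff.trans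
      (and_congr σ.injective.eq_iff Iff.rfl) (copyGraph_adj_of_forall_not_adj hG z w).symm)
  have hcol (i : Fin T.c) (z : A.V) : e z ∈ A.color i ↔ z ∈ A.color i :=
    (congrFun (congrFun (hσ z.1) z.2) i).to_iff
  have hexy : e ∘ ![x, y] = ![x', y'] := by
    ext i : 1
    fin_cases i
    · exact Prod.ext hσx hx.2
    · exact Prod.ext hσy hy.2
  exact (Fml.sat_comp_equiv A _ e hadj hcol φ).symm.trans (iff_of_eq (congrArg _ hexy))

lemma Transduction.exists_marks_sat_eta_iff (T : Transduction) {G : FGraph}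
    (hG : G ∈ EdgelessClass) (color : Fin T.c → Set (G.V × Fin T.k)) :
    ∃ Z : Fin (3 * Nat.card (Sym2 (CopyType T.k T.c))) → Set (CopyType T.k T.c),
      ∀ x y : G.V × Fin T.k, x.1 ≠ y.1 → (Fml.Sat (T.copyCGraph G color) T.I.η ![x, y] ↔
        MarkParity (List.ofFn Z) (copyType color x) (copyType color y)) := by
  let R s t := ∃ x y : G.V × Fin T.k, copyType color x = s ∧ copyType color y = t ∧
    x.1 ≠ y.1 ∧ Fml.Sat (T.copyCGraph G color) T.I.η ![x, y]
  obtain ⟨Z, hZ⟩ := exists_markParity_iff R fun _ _ ⟨x, y, hx, hy, hxy, h⟩ =>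
    ⟨y, x, hy, hx, hxy.symm, T.I.symm _ _ _ h⟩
  refine ⟨Z, fun x y hxy => ?_⟩
  rw [hZ]
  exact ⟨fun h => ⟨x, y, rfl, rfl, hxy, h⟩, fun ⟨x', y', hx, hy, hxy', h⟩ =>
    (T.sat_iff_of_copyType_eq hG color _ hxy hxy' hx.symm hy.symm).mpr h⟩

theorem Transduction.exists_image_edgeless_subset_perturbImage (T : Transduction) :
    ∃ p, TImage T EdgelessClass ⊆ PerturbImage p {G | ComponentsLE T.k G} := by
  refine ⟨3 * Nat.card (Sym2 (CopyType T.k T.c)), ?_⟩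
  rintro H ⟨G, hG, color, ⟨e⟩⟩
  obtain ⟨Z, hZ⟩ := T.exists_marks_sat_eta_iff hG color
  set R := T.I.result (T.copyCGraph G color)
  let f (x : {v // Fml.Sat (T.copyCGraph G color) T.I.ν ![v]}) := copyType color x.1
  let W i := f ⁻¹' Z i
  have hW (x y) : MarkParity (List.ofFn W) x y ↔ MarkParity (List.ofFn Z) (f x) (f y) := by
    rw [show List.ofFn W = (List.ofFn Z).map (f ⁻¹' ·) from
      (List.map_ofFn (f := Z) (g := (f ⁻¹' ·))).symm]
    exact markParity_map _ _ fun _ => Iff.rfl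
  have hsame (x y) (h : (perturbGraph (List.ofFn W) R).Adj x y) : x.1.1 = y.1.1 := by
    by_contra hxy
    rw [perturbGraph_adj, hW, ← hZ _ _ hxy] at h
    exact (_root_.xor_self _).mp h.2
  refine ⟨⟨_, perturbGraph (List.ofFn W) R⟩,
    componentsLE_of_injective (fun x => x.1) Subtype.val_injective hsame, W, ⟨?_⟩⟩
  rwa [perturbGraph_perturbGraph]

end CopyTypes

section BoundedComponents

variable (n p : ℕ)

/-- Colors of the encoding: the position `j` of a vertex in its clique of copies, adjacency to
the vertex in position `j` of the same clique, being a vertex of the encoded graph, and the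
`p` marks. -/
abbrev Palette : Type := (Fin n ⊕ Fin n) ⊕ (Unit ⊕ Fin p)

noncomputable def paletteEquiv : Palette n p ≃ Fin (Fintype.card (Palette n p)) :=
  Fintype.equivFin _

noncomputable def posColor (j : Fin n) : Fin (Fintype.card (Palette n p)) :=
  paletteEquiv n p (.inl (.inl j))

noncomputable def nbrColor (j : Fin n) : Fin (Fintype.card (Palette n p)) :=
  paletteEquiv n p (.inl (.inr j))

noncomputable def vertexColor : Fin (Fintype.card (Palette n p)) :=
  paletteEquiv n p (.inr (.inl ()))

noncomputable def markColor (t : Fin p) : Fin (Fintype.card (Palette n p)) :=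
  paletteEquiv n p (.inr (.inr t))

noncomputable def nbrFormula (x y : Fin 2) : Fml (Fintype.card (Palette n p)) 2 :=
  Fml.iOr ((List.finRange n).map fun j =>
    (Fml.col (nbrColor n p j) x).and (Fml.col (posColor n p j) y))

noncomputable def boundedComponentsEta : Fml (Fintype.card (Palette n p)) 2 :=
  (Fml.eq 0 1).not.and
    ((((Fml.eq 0 1).or (Fml.adj 0 1)).and ((nbrFormula n p 0 1).or (nbrFormula n p 1 0))).xor
      (Fml.oddCommonColors (List.ofFn (markColor n p)) 0 1))

lemma sat_boundedComponentsEta (A : CGraph (Fintype.card (Palette n p))) (x y : A.V) :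
    Fml.Sat A (boundedComponentsEta n p) ![x, y] ↔ x ≠ y ∧ Xor ((x = y ∨ A.G.Adj x y) ∧
      ((∃ j, x ∈ A.color (nbrColor n p j) ∧ y ∈ A.color (posColor n p j)) ∨
        (∃ j, y ∈ A.color (nbrColor n p j) ∧ x ∈ A.color (posColor n p j))))
      (MarkParity ((List.ofFn (markColor n p)).map A.color) x y) := by
  simp [boundedComponentsEta, nbrFormula, Fml.sat_oddCommonColors, Fml.Sat]

noncomputable def boundedComponentsTransduction (hn : 0 < n) : Transduction where
  k := n
  kpos := hn
  c := Fintype.card (Palette n p)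
  I :=
  { ν := .col (vertexColor n p) 0
    η := boundedComponentsEta n p
    symm := fun A u v h => by
      rw [sat_boundedComponentsEta] at h ⊢
      rw [markParity_comm, A.G.adj_comm, eq_comm (a := v)]
      grind
    irrefl := fun A v h => ((sat_boundedComponentsEta n p A v v).mp h).1 rfl }

variable {n p}

def paletteColoring {V β : Type} (G : SimpleGraph V) (Z : Fin p → Set V)
    (ι : V → β × Fin n) : Palette n p → Set (β × Fin n)
  | .inl (.inl j) => {z | z.2 = j}
  | .inl (.inr j) => {z | ∃ a b, G.Adj a b ∧ ι a = z ∧ ι b = (z.1, j)}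
  | .inr (.inl _) => Set.range ι
  | .inr (.inr t) => ι '' Z t

lemma boundedComponentsTransduction_mem {G₀ H : FGraph} {β : Type} [Finite β] (hn : 0 < n)
    (Z : Fin p → Set G₀.V) (e : H.G ≃g perturbGraph (List.ofFn Z) G₀.G)
    (ι : G₀.V → β × Fin n) (hι : Function.Injective ι)
    (hadj : ∀ u v, G₀.G.Adj u v → (ι u).1 = (ι v).1) :
    (boundedComponentsTransduction n p hn).mem ⟨β, ⊥⟩ H := by
  refine ⟨paletteColoring G₀.G Z ι ∘ (paletteEquiv n p).symm, ⟨?_⟩⟩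
  let A : CGraph (Fintype.card (Palette n p)) :=
    (boundedComponentsTransduction n p hn).copyCGraph ⟨β, ⊥⟩
      (paletteColoring G₀.G Z ι ∘ (paletteEquiv n p).symm)
  have hcol (κ : Palette n p) : A.color (paletteEquiv n p κ) = paletteColoring G₀.G Z ι κ :=
    congrArg (paletteColoring G₀.G Z ι) ((paletteEquiv n p).symm_apply_apply κ)
  let ι' : G₀.V → A.V := ι
  have hsame (u v : G₀.V) :
      (ι' u = ι' v ∨ A.G.Adj (ι' u) (ι' v)) ↔ (ι u).1 = (ι v).1 := by
    change (ι u = ι v ∨ (copyGraph ⊥ n).Adj (ι u) (ι v)) ↔ _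
    rw [copyGraph_adj_of_forall_not_adj (fun _ _ h => h), Prod.ext_iff]
    tauto
  have hnbr (u v : G₀.V) (h : (ι u).1 = (ι v).1) :
      (∃ j, ι' u ∈ A.color (nbrColor n p j) ∧ ι' v ∈ A.color (posColor n p j)) ↔
        G₀.G.Adj u v := by
    simp only [nbrColor, posColor, hcol, paletteColoring]
    constructor
    · rintro ⟨j, ⟨a, b, hab, ha, hb⟩, rfl⟩
      rwa [← hι ha, ← hι (hb.trans (Prod.ext h rfl))]
    · exact fun huv => ⟨(ι v).2, ⟨u, v, huv, rfl, Prod.ext h.symm rfl⟩, rfl⟩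
  have hedge (u v : G₀.V) : ((ι u).1 = (ι v).1 ∧
      ((∃ j, ι' u ∈ A.color (nbrColor n p j) ∧ ι' v ∈ A.color (posColor n p j)) ∨
        (∃ j, ι' v ∈ A.color (nbrColor n p j) ∧ ι' u ∈ A.color (posColor n p j)))) ↔
      G₀.G.Adj u v := by
    constructor
    · rintro ⟨h, huv | hvu⟩
      exacts [(hnbr u v h).mp huv, ((hnbr v u h.symm).mp hvu).symm]
    · exact fun huv => ⟨hadj u v huv, .inl ((hnbr u v (hadj u v huv)).mpr huv)⟩
  have hmarks (u v : G₀.V) :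
      MarkParity ((List.ofFn (markColor n p)).map A.color) (ι' u) (ι' v) ↔
        MarkParity (List.ofFn Z) u v := by
    have : (List.ofFn (markColor n p)).map A.color = (List.ofFn Z).map (ι '' ·) := by
      simp only [List.map_ofFn]
      exact congrArg List.ofFn (funext fun t => hcol (.inr (.inr t)))
    rw [this]
    exact markParity_map _ _ fun _ => and_congr hι.mem_set_image hι.mem_set_image
  refine ⟨e.toEquiv.trans ((Equiv.ofInjective ι hι).trans
    (Equiv.subtypeEquivRight fun z => ?_)), fun {a b} => ?_⟩
  · change z ∈ Set.range ι ↔ z ∈ A.color (paletteEquiv n p (.inr (.inl ())))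
    rw [hcol]
    rfl
  change Fml.Sat A (boundedComponentsEta n p) ![ι' (e a), ι' (e b)] ↔ H.G.Adj a b
  rw [sat_boundedComponentsEta, ← e.map_rel_iff, perturbGraph_adj, hsame, hedge, hmarks,
    (show Function.Injective ι' from hι).ne_iff]

end BoundedComponents

theorem exists_transduction_perturbImage_subset (n p : ℕ) (hn : 0 < n) :
    ∃ T : Transduction, T.k = n ∧
      PerturbImage p {G | ComponentsLE n G} ⊆ TImage T EdgelessClass := by
  refine ⟨boundedComponentsTransduction n p hn, rfl, ?_⟩
  rintro H ⟨G₀, hG₀, Z, ⟨e⟩⟩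
  obtain ⟨ι, hι, hadj⟩ := ComponentsLE.exists_injective hG₀
  exact ⟨⟨_, ⊥⟩, fun _ _ h => h, boundedComponentsTransduction_mem hn Z e ι hι hadj⟩

lemma perturbImage_mono {p : ℕ} {D D' : Set FGraph} (h : D ⊆ D') :
    PerturbImage p D ⊆ PerturbImage p D' :=
  fun _ ⟨G, hG, hGH⟩ => ⟨G, h hG, hGH⟩

lemma setOf_componentsLE_one : {G | ComponentsLE 1 G} = EdgelessClass :=
  Set.ext fun _ => componentsLE_one_iff

theorem transductions_of_edgeless_graphs_general (C : Set FGraph) :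
    (SqFO C EdgelessClass ↔
      ∃ D : Set FGraph, IsoClosed D ∧ BddComponents D ∧ IsPerturbationOfClass C D) ∧
    (SqFOnc C EdgelessClass ↔ IsPerturbationOfClass C EdgelessClass) := by
  refine ⟨⟨?_, ?_⟩, ⟨?_, ?_⟩⟩
  · rintro ⟨T, hT⟩
    obtain ⟨p, hp⟩ := T.exists_image_edgeless_subset_perturbImage
    exact ⟨_, isoClosed_componentsLE T.k, ⟨T.k, fun _ hG => hG⟩, p, hT.trans hp⟩
  · rintro ⟨D, -, ⟨n, hn⟩, p, hp⟩
    obtain ⟨T, -, hT⟩ := exists_transduction_perturbImage_subset (max n 1) p (by omega)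
    exact ⟨T, hp.trans ((perturbImage_mono fun G hG =>
      ComponentsLE.mono (le_max_left n 1) (hn G hG)).trans hT)⟩
  · rintro ⟨T, hk, hT⟩
    obtain ⟨p, hp⟩ := T.exists_image_edgeless_subset_perturbImage
    rw [hk, setOf_componentsLE_one] at hp
    exact ⟨p, hT.trans hp⟩
  · rintro ⟨p, hp⟩
    obtain ⟨T, hk, hT⟩ := exists_transduction_perturbImage_subset 1 p one_pos
    rw [setOf_componentsLE_one] at hT
    exact ⟨T, hk, hp.trans hT⟩

theorem transductions_of_edgeless_graphs (C : Set FGraph) (hC : IsoClosed C) :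
    (SqFO C EdgelessClass ↔
      ∃ D : Set FGraph, IsoClosed D ∧ BddComponents D ∧ IsPerturbationOfClass C D) ∧
    (SqFOnc C EdgelessClass ↔ IsPerturbationOfClass C EdgelessClass) :=
  transductions_of_edgeless_graphs_general C
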